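/- The function u(z) = Re(exp(1/z)) is harmonic on ℂ ∖ {0}, yet u does not have logarithmic growth near 0: for every a ∈ ℝ and every C ∈ ℝ, the inequality u(z) + a·log|z| ≤ C fails on every punctured neighbourhood of 0. (Hence maximality plus fibrewise finiteness does not imply logarithmic growth on the punctured disc.) -/

import Mathlib

open Complex Metric Filter Set

noncomputable section

/-- The average of `f` over the circle of radius `r` centred at `a`:
`(1/(2π)) ∫₀^{2π} f (a + r e^{iθ}) dθ`. -/
def circleAvg (f : ℂ → ℝ) (a : ℂ) (r : ℝ) : ℝ :=
  (1 / (2 * Real.pi)) *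
    ∫ θ in (0:ℝ)..(2 * Real.pi), f (a + (r : ℂ) * Complex.exp ((θ : ℂ) * Complex.I))

/-- `f` is subharmonic on `U`: upper semicontinuous on `U` and satisfying the
sub-mean value inequality on every closed disc contained in `U`. -/
def IsSubharmonicOn (f : ℂ → ℝ) (U : Set ℂ) : Prop :=
  UpperSemicontinuousOn f U ∧
    ∀ a ∈ U, ∀ r : ℝ, 0 < r → closedBall a r ⊆ U → f a ≤ circleAvg f a r

/-- `u` is harmonic on `U`: continuous on `U` and satisfying the mean value
property on every closed disc contained in `U`. -/
def IsHarmonicOn (u : ℂ → ℝ) (U : Set ℂ) : Prop :=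
  ContinuousOn u U ∧
    ∀ a ∈ U, ∀ r : ℝ, 0 < r → closedBall a r ⊆ U → u a = circleAvg u a r

/-- The supremum of `f` on the circle `{|z| = r}`. -/
def circleSup (f : ℂ → ℝ) (r : ℝ) : ℝ := sSup (f '' sphere (0:ℂ) r)

/-- The punctured open unit disc `𝔻* = {z : 0 < |z| < 1}`. -/
def punctDisc : Set ℂ := {z : ℂ | 0 < ‖z‖ ∧ ‖z‖ < 1}

/-- `f` has logarithmic growth near `0` witnessed by `a`:
`f(z) + a·log|z|` is bounded above on some punctured neighbourhood of `0`. -/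
def LogGrowth (f : ℂ → ℝ) (a : ℝ) : Prop :=
  ∃ C ε : ℝ, 0 < ε ∧ ∀ z : ℂ, 0 < ‖z‖ → ‖z‖ < ε →
    f z + a * Real.log ‖z‖ ≤ C

/-- `L = lim_{r→0⁺} (sup_{|z|=r} f + a log r)/(-log r)`; the generalized slope
of `f` at `0` is then `f̂ = L + a`. -/
def HasSlope (f : ℂ → ℝ) (a L : ℝ) : Prop :=
  Tendsto (fun r : ℝ => (circleSup f r + a * Real.log r) / (-Real.log r))
    (nhdsWithin 0 (Set.Ioi 0)) (nhds L)

/-- The open annulus `{s < |z| < t}`. -/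
def annulus (s t : ℝ) : Set ℂ := {z : ℂ | s < ‖z‖ ∧ ‖z‖ < t}

/-- The closed annulus `{s ≤ |z| ≤ t}`. -/
def closedAnnulus (s t : ℝ) : Set ℂ := {z : ℂ | s ≤ ‖z‖ ∧ ‖z‖ ≤ t}

/-- The boundary `{|z| = s} ∪ {|z| = 1}` of the annulus `{s < |z| < 1}`. -/
def annulusBoundary (s : ℝ) : Set ℂ := sphere (0:ℂ) s ∪ sphere (0:ℂ) 1


private lemma meanValue_exp_inv (a : ℂ) (r : ℝ) (hr : 0 < r)
    (hsub : closedBall a r ⊆ {(0:ℂ)}ᶜ) :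
    (Complex.exp (1/a)).re = circleAvg (fun z => (Complex.exp (1/z)).re) a r := by
  set F : ℂ → ℂ := fun z => Complex.exp (1/z) with hF
  have hd : DifferentiableOn ℂ F (closedBall a r) := by
    apply DifferentiableOn.cexp
    apply DifferentiableOn.div (differentiableOn_const 1) differentiableOn_id
    exact fun z hz => hsub hz
  have hC := hd.circleIntegral_sub_inv_smul (mem_ball_self hr)
  rw [circleIntegral] at hC
  simp only [deriv_circleMap, circleMap_sub_center, smul_eq_mul] at hC
  have hne : ∀ θ : ℝ, circleMap 0 r θ ≠ 0 := fun θ => by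
    simpa using circleMap_ne_center (c := (0:ℂ)) hr.ne' (θ := θ)
  have heq : ∀ θ : ℝ, circleMap 0 r θ * Complex.I * ((circleMap 0 r θ)⁻¹ * F (circleMap a r θ))
      = Complex.I * F (circleMap a r θ) := by
    intro θ
    field_simp [hne θ]
  rw [intervalIntegral.integral_congr (fun θ _ => heq θ)] at hC
  rw [intervalIntegral.integral_const_mul] at hC
  have h2 : (∫ θ in (0:ℝ)..(2*Real.pi), F (circleMap a r θ)) = 2 * (Real.pi:ℂ) * F a := by
    apply mul_left_cancel₀ Complex.I_ne_zero
    rw [hC]; ring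
  have hint : IntervalIntegrable (fun θ : ℝ => F (circleMap a r θ))
      MeasureTheory.volume 0 (2*Real.pi) := by
    apply Continuous.intervalIntegrable
    exact (Complex.continuous_exp.comp (continuous_const.div (continuous_circleMap a r)
      (fun θ => hsub (circleMap_mem_closedBall a hr.le θ)))).congr (fun θ => rfl)
  have hre := Complex.reCLM.intervalIntegral_comp_comm hint
  unfold circleAvg
  have hkey : (∫ θ in (0:ℝ)..(2*Real.pi),
      (F (a + (r:ℂ) * Complex.exp ((θ:ℂ) * Complex.I))).re) = 2 * Real.pi * (F a).re := by
    have h3 := hre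
    simp only [Complex.reCLM_apply] at h3
    simp only [circleMap, zero_add] at h3 h2
    rw [h3, h2]
    rw [show (2*(Real.pi:ℂ)*F a) = ((2*Real.pi:ℝ):ℂ) * F a by push_cast; ring,
      Complex.re_ofReal_mul]
  show (F a).re = _
  rw [hkey]
  field_simp

/-- **`Re(exp(1/z))` is harmonic on `ℂ ∖ {0}` but has no logarithmic growth at `0`.**
For every `a, C ∈ ℝ` and every `ε > 0` there is `z` with `0 < |z| < ε` and
`Re(exp(1/z)) + a·log|z| > C`. -/
theorem exp_inv_re_harmonic_no_log_growth :
    IsHarmonicOn (fun z : ℂ => (Complex.exp (1 / z)).re) {(0:ℂ)}ᶜ ∧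
    ∀ a C ε : ℝ, 0 < ε → ∃ z : ℂ, 0 < ‖z‖ ∧ ‖z‖ < ε ∧
      C < (Complex.exp (1 / z)).re + a * Real.log ‖z‖ := by
  constructor
  · constructor
    · apply Complex.continuous_re.comp_continuousOn
      exact Complex.continuous_exp.comp_continuousOn
        (continuousOn_const.div continuousOn_id (fun z hz => hz))
    · intro a _ r hr hsub
      exact meanValue_exp_inv a r hr hsub
  · intro a C ε hε
    set s : ℝ := max (max (4*|a|+1) (|C|+1)) (1/ε+1) with hs
    have hs1 : 4*|a|+1 ≤ s := le_trans (le_max_left _ _) (le_max_left _ _)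
    have hs2 : |C|+1 ≤ s := le_trans (le_max_right _ _) (le_max_left _ _)
    have hs3 : 1/ε+1 ≤ s := le_max_right _ _
    have hspos : 0 < s := by positivity
    have hs4 : 1 ≤ s := by nlinarith [abs_nonneg a]
    refine ⟨((s⁻¹ : ℝ) : ℂ), ?_, ?_, ?_⟩
    · rw [Complex.norm_real, Real.norm_eq_abs, abs_of_pos (inv_pos.2 hspos)]
      exact inv_pos.2 hspos
    · rw [Complex.norm_real, Real.norm_eq_abs, abs_of_pos (inv_pos.2 hspos)]
      rw [inv_lt_comm₀ hspos hε]
      calc ε⁻¹ = 1/ε := (one_div ε).symm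
        _ < 1/ε + 1 := by linarith
        _ ≤ s := hs3
    · have h1 : (1 / ((s⁻¹ : ℝ) : ℂ)) = ((s : ℝ) : ℂ) := by
        rw [one_div]
        push_cast
        rw [inv_inv]
      rw [h1]
      have h2 : (Complex.exp ((s:ℝ):ℂ)).re = Real.exp s := by
        rw [← Complex.ofReal_exp, Complex.ofReal_re]
      rw [h2, Complex.norm_real, Real.norm_eq_abs, abs_of_pos (inv_pos.2 hspos), Real.log_inv]
      have hlog0 : 0 ≤ Real.log s := Real.log_nonneg hs4
      have hlog : Real.log s ≤ s := (Real.log_le_sub_one_of_pos hspos).trans (by linarith)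
      have hexp : (s/2+1)^2 ≤ Real.exp s := by
        have h := Real.add_one_le_exp (s/2)
        have h2 : Real.exp s = Real.exp (s/2) * Real.exp (s/2) := by
          rw [← Real.exp_add]; ring_nf
        have hp : 0 ≤ s/2 + 1 := by linarith
        nlinarith [Real.exp_pos (s/2)]
      have ha1 : a * Real.log s ≤ |a| * Real.log s :=
        mul_le_mul_of_nonneg_right (le_abs_self a) hlog0
      have ha2 : |a| * Real.log s ≤ |a| * s :=
        mul_le_mul_of_nonneg_left hlog (abs_nonneg a)
      have hC1 : C ≤ |C| := le_abs_self C
      nlinarith [mul_nonneg hspos.le (by linarith : (0:ℝ) ≤ s - 4*|a|)]
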